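/- Let (M, M') be a matroid perspective on a finite totally ordered ground set E and let B be independent in M and spanning in M'. With X = (B \ Int_{M'}(B)) ∪ Ext_M(B), the set Int_{M'}(B) equals the lexicographically minimal basis B_min(M'/X) of the contraction M'/X. -/

import Mathlib

open Matroid Set
open scoped Classical

variable {α : Type*}

/-- A circuit of a matroid: a minimal dependent set. -/
def Circ (M : Matroid α) (C : Set α) : Prop := Minimal M.Dep C

/-- Contraction of a set `X` in a matroid `M`, defined via duality and restriction. -/
def mcon (M : Matroid α) (X : Set α) : Matroid α := (M✶ ↾ (M✶.E \ X))✶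

/-- The rank of a matroid: the (common) cardinality of its bases. -/
noncomputable def rkN (M : Matroid α) : ℕ := sSup (Set.ncard '' {B | M.IsBase B})

/-- The rank of a set `X` in a matroid `M`. -/
noncomputable def rset (M : Matroid α) (X : Set α) : ℕ := rkN (M ↾ X)

/-- `e` is the minimal element of the set `C`. -/
def IsMinOf [LinearOrder α] (e : α) (C : Set α) : Prop := e ∈ C ∧ ∀ f ∈ C, e ≤ f

/-- `e` is externally active in `M` with respect to `X`. -/
def ExtAct [LinearOrder α] (M : Matroid α) (X : Set α) (e : α) : Prop :=
  e ∈ M.E \ X ∧ ∃ C, Circ M C ∧ C ⊆ insert e X ∧ IsMinOf e C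

/-- `e` is internally active in `M'` with respect to `X`. -/
def IntAct [LinearOrder α] (M' : Matroid α) (X : Set α) (e : α) : Prop :=
  e ∈ X ∧ ∃ C, Circ (M'✶) C ∧ C ⊆ insert e (M'.E \ X) ∧ IsMinOf e C

/-- The set `Ext_M(X)` of externally active elements. -/
def ExtSet [LinearOrder α] (M : Matroid α) (X : Set α) : Set α := {e | ExtAct M X e}

/-- The set `Int_{M'}(X)` of internally active elements. -/
def IntSet [LinearOrder α] (M' : Matroid α) (X : Set α) : Set α := {e | IntAct M' X e}

/-- `Y` is `(M,<)`-compatible: no `M`-circuit `C` satisfies `Y ∩ C = {min C}`. -/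
def Compat [LinearOrder α] (M : Matroid α) (Y : Set α) : Prop :=
  ¬ ∃ C e, Circ M C ∧ IsMinOf e C ∧ Y ∩ C = {e}

/-- `(M, M')` is a matroid perspective: same ground set, and every circuit of `M`
is a union of circuits of `M'` (equivalently, every point of an `M`-circuit `C` lies in
an `M'`-circuit contained in `C`). -/
def Perspective (M M' : Matroid α) : Prop :=
  M.E = M'.E ∧ ∀ C, Circ M C → ∀ x ∈ C, ∃ C', Circ M' C' ∧ C' ⊆ C ∧ x ∈ C'

/-- `A` is lexicographically smaller than `B` (at the minimal element where they differ). -/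
def LexLT [LinearOrder α] (A B : Set α) : Prop :=
  ∃ e, e ∈ A ∧ e ∉ B ∧ ∀ f, f < e → (f ∈ A ↔ f ∈ B)

/-- `B` is the lexicographically minimal basis of `M`. -/
def MinBasis [LinearOrder α] (M : Matroid α) (B : Set α) : Prop :=
  M.IsBase B ∧ ∀ B', M.IsBase B' → ¬ LexLT B' B

/-- The collection `D(M, M', <)` of compatible sets of a matroid perspective. -/
def DSet [LinearOrder α] (M M' : Matroid α) : Set (Set α) :=
  {X | X ⊆ M.E ∧ Compat (M'✶) X ∧ Compat M (M.E \ X)}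

section Aux

variable {M : Matroid α} {C D K : Set α} {x e : α}

lemma Circ.dep (h : Circ M C) : M.Dep C := h.1

lemma Circ.subset_ground (h : Circ M C) : C ⊆ M.E := h.1.subset_ground

lemma Circ.ssubset_indep (h : Circ M C) (hDC : D ⊂ C) : M.Indep D := by
  rw [← not_dep_iff (hDC.subset.trans h.subset_ground)]
  exact fun hD => hDC.ne (hDC.subset.antisymm (h.2 hD hDC.subset))

lemma exists_circ_subset [Fintype α] {D : Set α} (hD : M.Dep D) :
    ∃ C, Circ M C ∧ C ⊆ D := by
  obtain ⟨n, hn⟩ : ∃ n, D.ncard ≤ n := ⟨D.ncard, le_rfl⟩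
  induction n generalizing D with
  | zero =>
    refine ⟨D, ⟨hD, fun D' _ _ => ?_⟩, subset_rfl⟩
    have hD0 : D = ∅ := by
      rw [← Set.ncard_eq_zero (Set.toFinite D)]; omega
    exact hD0 ▸ empty_subset _
  | succ n ih =>
    by_cases h : ∀ D' ⊂ D, ¬ M.Dep D'
    · exact ⟨D, ⟨hD, fun D' hD' hsub =>
        by_contra fun hns => h D' (lt_of_le_not_ge hsub hns) hD'⟩, subset_rfl⟩
    · push_neg at h
      obtain ⟨D', hss, hD'⟩ := h
      have hlt : D'.ncard < D.ncard := Set.ncard_lt_ncard hss (Set.toFinite D)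
      obtain ⟨C, hC, hCD⟩ := ih hD' (by omega)
      exact ⟨C, hC, hCD.trans hss.subset⟩

lemma circ_mem_closure (hC : Circ M C) (hx : x ∈ C) : x ∈ M.closure (C \ {x}) := by
  have hI : M.Indep (C \ {x}) := by
    refine hC.ssubset_indep ⟨diff_subset, fun hsub => ?_⟩
    exact (hsub hx).2 rfl
  have hdep : M.Dep (insert x (C \ {x})) := by
    rw [insert_diff_singleton, insert_eq_of_mem hx]; exact hC.dep
  exact (hI.insert_dep_iff.1 hdep).1

lemma circ_inter_cocirc_ne_singleton (hC : Circ M C) (hK : Circ (M✶) K) (x : α) :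
    C ∩ K ≠ {x} := by
  intro hxCK
  have hxm : x ∈ C ∩ K := hxCK ▸ rfl
  have hKE : K ⊆ M.E := hK.subset_ground
  have hsub : C \ {x} ⊆ M.E \ K := by
    rintro y ⟨hyC, hyx⟩
    refine ⟨hC.subset_ground hyC, fun hyK => hyx ?_⟩
    have : y ∈ C ∩ K := ⟨hyC, hyK⟩
    rw [hxCK] at this; exact this
  have hxcl : x ∈ M.closure (M.E \ K) :=
    M.closure_subset_closure hsub (circ_mem_closure hC hxm.1)
  have hKx : M.Coindep (K \ {x}) := by
    rw [coindep_def]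
    refine hK.ssubset_indep ⟨diff_subset, fun hsub => ?_⟩
    exact (hsub hxm.2).2 rfl
  have hspan : M.Spanning (M.E \ (K \ {x})) :=
    (coindep_iff_compl_spanning ((diff_subset).trans hKE)).1 hKx
  have hxK := hxm.2
  have hxE := hKE hxm.2
  have heq : M.E \ (K \ {x}) = insert x (M.E \ K) := by
    ext y
    simp only [mem_diff, mem_insert_iff, mem_singleton_iff]
    by_cases hy : y = x <;> simp [hy, hxK, hxE]
  have hins : insert x (M.E \ K) ⊆ M.closure (M.E \ K) :=
    insert_subset hxcl (M.subset_closure _ diff_subset)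
  have hcl2 : M.closure (insert x (M.E \ K)) ⊆ M.closure (M.E \ K) :=
    M.closure_subset_closure_of_subset_closure hins
  have hsp : M.Spanning (M.E \ K) := by
    rw [spanning_iff_closure_eq diff_subset]
    refine subset_antisymm (M.closure_subset_ground _) ?_
    calc M.E = M.closure (M.E \ (K \ {x})) := hspan.closure_eq.symm
      _ = M.closure (insert x (M.E \ K)) := by rw [heq]
      _ ⊆ M.closure (M.E \ K) := hcl2
  have : M.Coindep K := (coindep_iff_compl_spanning hKE).2 hsp
  exact hK.dep.1 (coindep_def.1 this)

lemma circ_restrict_iff {R : Set α} (hR : R ⊆ M.E) :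
    Circ (M ↾ R) C ↔ Circ M C ∧ C ⊆ R := by
  have hdep : ∀ X ⊆ R, ((M ↾ R).Dep X ↔ M.Dep X) := by
    intro X hXR
    rw [restrict_dep_iff, dep_iff, and_iff_left (hXR.trans hR), and_iff_left hXR]
  constructor
  · rintro ⟨h1, h2⟩
    have hCR : C ⊆ R := h1.subset_ground
    refine ⟨⟨(hdep C hCR).1 h1, fun D hD hDC => h2 ((hdep D (hDC.trans hCR)).2 hD) hDC⟩, hCR⟩
  · rintro ⟨⟨h1, h2⟩, hCR⟩
    refine ⟨(hdep C hCR).2 h1, fun D hD hDC => h2 ((hdep D (hDC.trans hCR)).1 hD) hDC⟩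

end Aux

lemma minBasis_of_int_active [Fintype α] [LinearOrder α] {N : Matroid α} {B : Set α}
    (hB : N.IsBase B)
    (h : ∀ g ∈ B, ∃ K, Circ (N✶) K ∧ K ⊆ insert g (N.E \ B) ∧ IsMinOf g K) :
    MinBasis N B := by
  refine ⟨hB, fun B' hB' hlt => ?_⟩
  obtain ⟨e, heB', heB, hagree⟩ := hlt
  have heE : e ∈ N.E := hB'.subset_ground heB'
  have hdep : N.Dep (insert e B) := by
    rw [← not_indep_iff (insert_subset heE hB.subset_ground)]
    exact fun hind => heB (hB.eq_of_subset_indep hind (subset_insert _ _) ▸ mem_insert e B)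
  obtain ⟨C, hC, hCsub⟩ := exists_circ_subset hdep
  have heC : e ∈ C := by
    by_contra heC
    have : C ⊆ B := fun y hy => ((hCsub hy).resolve_left (fun h => heC (h ▸ hy)))
    exact hC.dep.1 (hB.indep.subset this)
  obtain ⟨g, hgC, hgB'⟩ : ∃ g ∈ C, g ∉ B' := by
    by_contra hno
    push_neg at hno
    exact hC.dep.1 (hB'.indep.subset hno)
  have hge : g ≠ e := fun h => hgB' (h ▸ heB')
  have hgB : g ∈ B := (hCsub hgC).resolve_left hge
  have helt : e < g := by
    rcases lt_trichotomy e g with h | h | h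
    · exact h
    · exact absurd h.symm hge
    · exact absurd ((hagree g h).2 hgB) hgB'
  obtain ⟨K, hK, hKsub, hgK, hgmin⟩ := h g hgB
  by_cases heK : e ∈ K
  · exact absurd (hgmin e heK) (not_le.mpr helt)
  · refine circ_inter_cocirc_ne_singleton hC hK g ?_
    apply subset_antisymm
    · rintro y ⟨hyC, hyK⟩
      rcases hCsub hyC with rfl | hyB
      · exact absurd hyK heK
      · rcases hKsub hyK with rfl | hyE
        · rfl
        · exact absurd hyB hyE.2
    · rintro y rfl
      exact ⟨hgC, hgK⟩


/-- For `B` independent in `M` and spanning in `M'`, with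
`X = (B \ Int_{M'}(B)) ∪ Ext_M(B)`, the set `Int_{M'}(B)` is the lexicographically
minimal basis of the contraction `M'/X`. -/
theorem int_eq_minBasis [Fintype α] [LinearOrder α] (M M' : Matroid α)
    (hP : Perspective M M') (B : Set α) (hBi : M.Indep B) (hBs : M'.Spanning B) :
    MinBasis (mcon M' ((B \ IntSet M' B) ∪ ExtSet M B)) (IntSet M' B) := by
  set I := IntSet M' B with hIdef
  set Ext := ExtSet M B with hExtdef
  set X := (B \ I) ∪ Ext with hXdef
  set E' := M'.E with hE'
  have hME : M.E = E' := hP.1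
  have hBE : B ⊆ E' := hME ▸ hBi.subset_ground
  have hIB : I ⊆ B := fun e he => he.1
  have hExtnB : ∀ e ∈ Ext, e ∈ E' \ B := fun e he => hME ▸ he.1
  set S := E' \ X with hSdef
  -- S \ I = E' \ (B ∪ Ext)
  have hSI : S \ I = E' \ (B ∪ Ext) := by
    ext y
    simp only [hSdef, hXdef, mem_diff, mem_union, not_or, mem_diff]
    constructor
    · rintro ⟨⟨hyE, h1, h2⟩, hyI⟩
      refine ⟨hyE, ?_, h2⟩
      intro hyB
      exact h1 ⟨hyB, hyI⟩
    · rintro ⟨hyE, hyB, hyExt⟩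
      exact ⟨⟨hyE, fun h => hyB h.1, hyExt⟩, fun h => hyB (hIB h)⟩
  have hIS : I ⊆ S := by
    intro e he
    refine ⟨hBE (hIB he), ?_⟩
    rintro (⟨-, h2⟩ | hExt)
    · exact h2 he
    · exact (hExtnB e hExt).2 (hIB he)
  -- Key: every e ∈ I has a cocircuit of M' avoiding B ∪ Ext except at e, with e its min
  have hkey : ∀ e ∈ I, ∃ K, Circ (M'✶) K ∧ K ⊆ insert e (E' \ (B ∪ Ext)) ∧ IsMinOf e K := by
    intro e he
    obtain ⟨heB, K, hK, hKsub, hKmin⟩ := he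
    refine ⟨K, hK, ?_, hKmin⟩
    have hKExt : ∀ f ∈ K, f ∉ Ext := by
      rintro f hfK ⟨hfEB, D, hD, hDsub, hDmin⟩
      obtain ⟨D', hD', hD'D, hfD'⟩ := hP.2 D hD f hDmin.1
      have hcap : D' ∩ K = {f} := by
        apply subset_antisymm
        · rintro y ⟨hyD', hyK⟩
          rcases hDsub (hD'D hyD') with rfl | hyB
          · rfl
          · rcases hKsub hyK with hye | hyE
            · exfalso
              subst hye
              have h1 : f ≤ y := hDmin.2 y (hD'D hyD')
              have h2 : y ≤ f := hKmin.2 f hfK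
              exact hfEB.2 ((le_antisymm h2 h1) ▸ heB)
            · exact absurd hyB hyE.2
        · rintro y rfl
          exact ⟨hfD', hfK⟩
      exact circ_inter_cocirc_ne_singleton hD' hK f hcap
    intro y hyK
    rcases hKsub hyK with rfl | hyE
    · exact mem_insert _ _
    · exact Or.inr ⟨hyE.1, fun h => h.elim (hyE.2) (hKExt y hyK)⟩
  have hSE : S ⊆ M'✶.E := diff_subset
  have hN : mcon M' X = (M'✶ ↾ S)✶ := rfl
  have hNE : (mcon M' X).E = S := rfl
  -- S \ I is a basis of S in M'✶
  have hindep : M'✶.Indep (S \ I) := by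
    refine Matroid.Coindep.indep ?_
    rw [coindep_iff_compl_spanning (show S \ I ⊆ M'.E from fun y hy => hy.1.1)]
    refine hBs.superset ?_ diff_subset
    intro b hb
    refine ⟨hBE hb, ?_⟩
    rintro ⟨hbS, hbI⟩
    exact hbS.2 (Or.inl ⟨hb, hbI⟩)
  have hbasis : M'✶.IsBasis (S \ I) S := by
    refine hindep.isBasis_of_forall_insert diff_subset ?_
    intro f hf
    have hfI : f ∈ I := by
      by_contra h
      exact hf.2 ⟨hf.1, h⟩
    obtain ⟨K, hK, hKsub, hKmin⟩ := hkey f hfI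
    refine hK.dep.superset ?_ (insert_subset (hSE hf.1) ((diff_subset).trans hSE))
    rw [hSI]
    exact hKsub
  have hbase : (mcon M' X).IsBase I := by
    rw [hN, dual_isBase_iff (show I ⊆ ((M'✶ ↾ S)).E from hIS)]
    rw [show (M'✶ ↾ S).E = S from rfl]
    rw [isBase_restrict_iff hSE]
    exact hbasis
  refine minBasis_of_int_active hbase ?_
  intro g hg
  obtain ⟨K, hK, hKsub, hKmin⟩ := hkey g hg
  have hKsub' : K ⊆ insert g (S \ I) := by rw [hSI]; exact hKsub
  refine ⟨K, ?_, ?_, hKmin⟩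
  · rw [hN, dual_dual, circ_restrict_iff hSE]
    exact ⟨hK, hKsub'.trans (insert_subset (hIS hg) diff_subset)⟩
  · rw [hNE]
    exact hKsub'
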